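/- As β → 0⁺, the limiting variance of the one-dimensional Dunkel–Hänggi relativistic diffusion satisfies Σ_β² ∼ A / log(1/β) for the explicit positive constant A := 2 ∫₀^∞ ( ∫_x^∞ e^{−u} u^{−1} du )² eˣ dx; that is, lim_{β→0⁺} log(1/β) · K_β / J_β = A. -/

import Mathlib

open Filter MeasureTheory Set Real Topology

/-!
After the substitution `u = β y` the numerator becomes `K_β = 2 ∫₀^∞ F β`, where `F β t` is
continuous in `β` down to `β = 0` and `F 0 t = E₁(t)² eᵗ`; dominated convergence applies with
the majorant `e² F 0`, integrable because `E₁(t) ≤ C t^{-1/4} e^{-3t/4}`. The denominator satisfies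
`J_β ~ log(1/β)`: the integrand is at most `1` on `[0, 1]`, at most `1/z` on `[1, 1/β]` and
exponentially small beyond, while from below it dominates `e^{-βz}/(1+z)`. Integrating the latter
up to `c = 1/(β L)`, `L = log(1/β)`, gives `J_β ≥ e^{-1/L} (L - log L)`.
-/

lemma le_sqrt_sq_add_sq (a b : ℝ) : b ≤ √(a ^ 2 + b ^ 2) :=
  Real.le_sqrt_of_sq_le (by nlinarith)

lemma sqrt_sq_add_sq_le_add {a b : ℝ} (ha : 0 ≤ a) (hb : 0 ≤ b) : √(a ^ 2 + b ^ 2) ≤ a + b :=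
  Real.sqrt_le_iff.2 ⟨by positivity, by nlinarith⟩

lemma sqrt_sq_add_mul_sq {a : ℝ} (ha : 0 ≤ a) (y : ℝ) :
    √(a ^ 2 + (a * y) ^ 2) = a * √(1 + y ^ 2) := by
  rw [show a ^ 2 + (a * y) ^ 2 = a ^ 2 * (1 + y ^ 2) by ring, sqrt_mul (sq_nonneg a), sqrt_sq ha]

lemma exp_neg_mul_inv_le {t u : ℝ} (ht : 0 < t) (htu : t ≤ u) :
    exp (-u) * u⁻¹ ≤
      (t ^ (-(1 / 4) : ℝ) * exp (-(3 / 4) * t)) * (u ^ (-(3 / 4) : ℝ) * exp (-(1 / 4) * u)) := by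
  have hu : 0 < u := ht.trans_le htu
  have hinv : u⁻¹ = u ^ (-(1 / 4) : ℝ) * u ^ (-(3 / 4) : ℝ) := by
    rw [← rpow_add hu, ← rpow_neg_one]; norm_num
  have hexp : exp (-u) = exp (-(3 / 4) * u) * exp (-(1 / 4) * u) := by
    rw [← exp_add]; ring_nf
  have h₁ : u ^ (-(1 / 4) : ℝ) ≤ t ^ (-(1 / 4) : ℝ) := rpow_le_rpow_of_nonpos ht htu (by norm_num)
  have h₂ : exp (-(3 / 4) * u) ≤ exp (-(3 / 4) * t) := exp_le_exp.2 (by linarith)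
  rw [hinv, hexp]
  calc exp (-(3 / 4) * u) * exp (-(1 / 4) * u) * (u ^ (-(1 / 4) : ℝ) * u ^ (-(3 / 4) : ℝ))
      = (u ^ (-(1 / 4) : ℝ) * exp (-(3 / 4) * u)) * (u ^ (-(3 / 4) : ℝ) * exp (-(1 / 4) * u)) := by
        ring
    _ ≤ _ := by gcongr

lemma integrableOn_rpow_mul_exp_neg_quarter :
    IntegrableOn (fun u : ℝ => u ^ (-(3 / 4) : ℝ) * exp (-(1 / 4) * u)) (Ioi 0) := by
  simpa using integrableOn_rpow_mul_exp_neg_mul_rpow (p := 1) (s := -(3 / 4)) (b := 1 / 4)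
    (by norm_num) one_pos (by norm_num)

lemma antitoneOn_setIntegral_Ioi {f : ℝ → ℝ} {a : ℝ} (hf : ∀ t ∈ Ioi a, IntegrableOn f (Ioi t))
    (hf₀ : ∀ u ∈ Ioi a, 0 ≤ f u) : AntitoneOn (fun t => ∫ u in Ioi t, f u) (Ioi a) :=
  fun x hx _ _ hxy => setIntegral_mono_set (hf x hx)
    ((ae_restrict_iff' measurableSet_Ioi).2
      (.of_forall fun u hu => hf₀ u (Ioi_subset_Ioi hx.le hu)))
    (Ioi_subset_Ioi hxy).eventuallyLE

namespace DunkelHanggi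

/-! `I β (β x)` is the paper's `I_β(x)` and `J β` is `J_β`; at `β = 0`, `g` becomes `e^{-u}/u`. -/

noncomputable def g (β u : ℝ) : ℝ := u * exp (β - √(β ^ 2 + u ^ 2)) / (β ^ 2 + u ^ 2)

noncomputable def I (β t : ℝ) : ℝ := ∫ u in Ioi t, g β u

noncomputable def F (β t : ℝ) : ℝ := I β t ^ 2 * exp (√(β ^ 2 + t ^ 2) - β)

noncomputable def j (β z : ℝ) : ℝ := exp (β * (1 - √(1 + z ^ 2))) / √(1 + z ^ 2)

noncomputable def J (β : ℝ) : ℝ := ∫ z in Ioi 0, j β z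

variable {β t u : ℝ}

lemma g_nonneg (hu : 0 ≤ u) : 0 ≤ g β u := by
  unfold g; positivity

lemma measurable_g : Measurable (g β) := by
  unfold g; fun_prop

lemma continuous_g_left (hu : u ≠ 0) : Continuous fun β => g β u := by
  unfold g
  exact Continuous.div (by fun_prop) (by fun_prop) fun β => by positivity

lemma g_zero (hu : 0 ≤ u) : g 0 u = exp (-u) * u⁻¹ := by
  rcases hu.eq_or_lt with rfl | hu
  · simp [g]
  · simp only [g, zero_pow two_ne_zero, zero_add, sqrt_sq hu.le, zero_sub]
    field_simp

lemma g_le_exp_one_mul (hβ : β ≤ 1) (hu : 0 < u) : g β u ≤ exp 1 * g 0 u := by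
  have hsqrt : u ≤ √(β ^ 2 + u ^ 2) := le_sqrt_sq_add_sq β u
  rw [g_zero hu.le, g]
  calc u * exp (β - √(β ^ 2 + u ^ 2)) / (β ^ 2 + u ^ 2) ≤ u * exp (1 - u) / u ^ 2 := by
        gcongr
        exact le_add_of_nonneg_left (sq_nonneg β)
    _ = exp 1 * (exp (-u) * u⁻¹) := by
        rw [sub_eq_add_neg, exp_add]; field_simp

lemma g_zero_le (ht : 0 < t) (htu : t ≤ u) :
    g 0 u ≤
      (t ^ (-(1 / 4) : ℝ) * exp (-(3 / 4) * t)) * (u ^ (-(3 / 4) : ℝ) * exp (-(1 / 4) * u)) :=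
  g_zero (ht.le.trans htu) ▸ exp_neg_mul_inv_le ht htu

lemma integrableOn_g_zero (ht : 0 < t) : IntegrableOn (g 0) (Ioi t) := by
  refine Integrable.mono' ((integrableOn_rpow_mul_exp_neg_quarter.mono_set
    (Ioi_subset_Ioi ht.le)).const_mul (t ^ (-(1 / 4) : ℝ) * exp (-(3 / 4) * t)))
    measurable_g.aestronglyMeasurable ?_
  filter_upwards [ae_restrict_mem measurableSet_Ioi] with u hu
  rw [norm_of_nonneg (g_nonneg (ht.trans hu).le)]
  exact g_zero_le ht hu.le

lemma integrableOn_g (hβ : β ≤ 1) (ht : 0 < t) : IntegrableOn (g β) (Ioi t) := by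
  refine Integrable.mono' ((integrableOn_g_zero ht).const_mul (exp 1))
    measurable_g.aestronglyMeasurable ?_
  filter_upwards [ae_restrict_mem measurableSet_Ioi] with u hu
  rw [norm_of_nonneg (g_nonneg (ht.trans hu).le)]
  exact g_le_exp_one_mul hβ (ht.trans hu)

lemma I_nonneg (ht : 0 ≤ t) : 0 ≤ I β t :=
  setIntegral_nonneg measurableSet_Ioi fun _ hu => g_nonneg (ht.trans hu.le)

lemma I_le_exp_one_mul (hβ : β ≤ 1) (ht : 0 < t) : I β t ≤ exp 1 * I 0 t := by
  rw [I, I, ← integral_const_mul]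
  exact setIntegral_mono_on (integrableOn_g hβ ht) ((integrableOn_g_zero ht).const_mul _)
    measurableSet_Ioi fun u hu => g_le_exp_one_mul hβ (ht.trans hu)

lemma I_zero_le (ht : 0 < t) :
    I 0 t ≤ (∫ u in Ioi 0, u ^ (-(3 / 4) : ℝ) * exp (-(1 / 4) * u)) *
      (t ^ (-(1 / 4) : ℝ) * exp (-(3 / 4) * t)) := by
  rw [I, mul_comm, ← integral_const_mul]
  calc ∫ u in Ioi t, g 0 u
      ≤ ∫ u in Ioi t, t ^ (-(1 / 4) : ℝ) * exp (-(3 / 4) * t) *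
          (u ^ (-(3 / 4) : ℝ) * exp (-(1 / 4) * u)) :=
        setIntegral_mono_on (integrableOn_g_zero ht)
          ((integrableOn_rpow_mul_exp_neg_quarter.mono_set (Ioi_subset_Ioi ht.le)).const_mul _)
          measurableSet_Ioi fun u hu => g_zero_le ht hu.le
    _ ≤ _ := by
        refine setIntegral_mono_set (integrableOn_rpow_mul_exp_neg_quarter.const_mul _) ?_
          (Ioi_subset_Ioi ht.le).eventuallyLE
        filter_upwards [ae_restrict_mem measurableSet_Ioi] with u (hu : 0 < u)
        positivity

lemma I_zero (ht : 0 ≤ t) : I 0 t = ∫ u in Ioi t, exp (-u) * u⁻¹ :=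
  setIntegral_congr_fun measurableSet_Ioi fun _ hu => g_zero (ht.trans (le_of_lt hu))

lemma F_zero (ht : 0 ≤ t) : F 0 t = I 0 t ^ 2 * exp t := by
  simp [F, sqrt_sq ht]

lemma F_nonneg : 0 ≤ F β t := by
  unfold F; positivity

lemma F_le_exp_one_sq_mul (hβ₀ : 0 ≤ β) (hβ₁ : β ≤ 1) (ht : 0 < t) :
    F β t ≤ exp 1 ^ 2 * F 0 t := by
  have hsqrt : √(β ^ 2 + t ^ 2) - β ≤ t := by linarith [sqrt_sq_add_sq_le_add hβ₀ ht.le]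
  rw [F_zero ht.le, F, ← mul_assoc, ← mul_pow]
  gcongr
  · exact I_nonneg ht.le
  · exact I_le_exp_one_mul hβ₁ ht

lemma aestronglyMeasurable_F (hβ : β ≤ 1) :
    AEStronglyMeasurable (F β) (volume.restrict (Ioi 0)) := by
  have hI : AEMeasurable (I β) (volume.restrict (Ioi 0)) :=
    aemeasurable_restrict_of_antitoneOn measurableSet_Ioi <| antitoneOn_setIntegral_Ioi
      (fun _ ht => integrableOn_g hβ ht) fun _ hu => g_nonneg (le_of_lt hu)
  exact ((hI.pow_const 2).mul (by fun_prop)).aestronglyMeasurable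

lemma integrableOn_F_zero : IntegrableOn (F 0) (Ioi 0) := by
  set C := ∫ u in Ioi 0, u ^ (-(3 / 4) : ℝ) * exp (-(1 / 4) * u)
  have hint : IntegrableOn (fun t : ℝ => t ^ (-(1 / 2) : ℝ) * exp (-(1 / 2) * t)) (Ioi 0) := by
    simpa using integrableOn_rpow_mul_exp_neg_mul_rpow (p := 1) (s := -(1 / 2)) (b := 1 / 2)
      (by norm_num) one_pos (by norm_num)
  refine Integrable.mono' (hint.const_mul (C ^ 2)) (aestronglyMeasurable_F zero_le_one) ?_
  filter_upwards [ae_restrict_mem measurableSet_Ioi] with t (ht : 0 < t)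
  have hpow : (t ^ (-(1 / 4) : ℝ)) ^ 2 = t ^ (-(1 / 2) : ℝ) := by
    rw [← rpow_natCast, ← rpow_mul ht.le]; norm_num
  have hexp : exp (-(3 / 4) * t) ^ 2 * exp t = exp (-(1 / 2) * t) := by
    rw [sq, ← exp_add, ← exp_add]; ring_nf
  rw [norm_of_nonneg F_nonneg, F_zero ht.le]
  calc I 0 t ^ 2 * exp t ≤ (C * (t ^ (-(1 / 4) : ℝ) * exp (-(3 / 4) * t))) ^ 2 * exp t := by
        gcongr
        · exact I_nonneg ht.le
        · exact I_zero_le ht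
    _ = C ^ 2 * ((t ^ (-(1 / 4) : ℝ)) ^ 2 * (exp (-(3 / 4) * t) ^ 2 * exp t)) := by ring
    _ = C ^ 2 * (t ^ (-(1 / 2) : ℝ) * exp (-(1 / 2) * t)) := by rw [hpow, hexp]

lemma tendsto_I (ht : 0 < t) : Tendsto (fun β => I β t) (𝓝[>] 0) (𝓝 (I 0 t)) := by
  have hβ : ∀ᶠ β in 𝓝[>] (0 : ℝ), β ≤ 1 :=
    nhdsWithin_le_nhds (eventually_le_nhds zero_lt_one)
  refine tendsto_integral_filter_of_dominated_convergence (fun u => exp 1 * g 0 u)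
    (.of_forall fun _ => measurable_g.aestronglyMeasurable) ?_
    ((integrableOn_g_zero ht).const_mul _) ?_
  · filter_upwards [hβ] with β hβ
    filter_upwards [ae_restrict_mem measurableSet_Ioi] with u hu
    rw [norm_of_nonneg (g_nonneg (ht.trans hu).le)]
    exact g_le_exp_one_mul hβ (ht.trans hu)
  · filter_upwards [ae_restrict_mem measurableSet_Ioi] with u hu
    exact ((continuous_g_left (ht.trans hu).ne').tendsto 0).mono_left nhdsWithin_le_nhds

lemma tendsto_F (ht : 0 < t) : Tendsto (fun β => F β t) (𝓝[>] 0) (𝓝 (F 0 t)) :=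
  ((tendsto_I ht).pow 2).mul <|
    ((by fun_prop : Continuous fun β : ℝ => exp (√(β ^ 2 + t ^ 2) - β)).tendsto 0).mono_left
      nhdsWithin_le_nhds

lemma tendsto_integral_F :
    Tendsto (fun β => ∫ t in Ioi 0, F β t) (𝓝[>] 0) (𝓝 (∫ t in Ioi 0, F 0 t)) := by
  have hβ : ∀ᶠ β in 𝓝[>] (0 : ℝ), β ∈ Ioc 0 1 := Ioc_mem_nhdsGT zero_lt_one
  refine tendsto_integral_filter_of_dominated_convergence (fun t => exp 1 ^ 2 * F 0 t)
    (hβ.mono fun β hβ => aestronglyMeasurable_F hβ.2) ?_ (integrableOn_F_zero.const_mul _) ?_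
  · filter_upwards [hβ] with β hβ
    filter_upwards [ae_restrict_mem measurableSet_Ioi] with t ht
    rw [norm_of_nonneg F_nonneg]
    exact F_le_exp_one_sq_mul hβ.1.le hβ.2 ht
  · filter_upwards [ae_restrict_mem measurableSet_Ioi] with t ht
    exact tendsto_F ht

lemma integral_Ioi_eq_I (hβ : 0 < β) (x : ℝ) :
    ∫ y in Ioi x, y * exp (β * (1 - √(1 + y ^ 2))) / (1 + y ^ 2) = I β (β * x) := by
  have hg : ∀ y : ℝ, y * exp (β * (1 - √(1 + y ^ 2))) / (1 + y ^ 2) = β * g β (β * y) := by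
    intro y
    rw [g, sqrt_sq_add_mul_sq hβ.le]
    field_simp
  simp_rw [hg]
  rw [integral_const_mul, integral_comp_mul_left_Ioi (g β) x hβ, smul_eq_mul,
    mul_inv_cancel_left₀ hβ.ne', I]

lemma K_eq_two_mul_integral_F (hβ : 0 < β) :
    2 * β * ∫ x in Ioi (0:ℝ),
        (∫ y in Ioi x, y * exp (β * (1 - √(1 + y ^ 2))) / (1 + y ^ 2)) ^ 2 *
          exp (β * (√(1 + x ^ 2) - 1)) =
      2 * ∫ t in Ioi 0, F β t := by
  have hF : ∀ x : ℝ, (∫ y in Ioi x, y * exp (β * (1 - √(1 + y ^ 2))) / (1 + y ^ 2)) ^ 2 *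
      exp (β * (√(1 + x ^ 2) - 1)) = F β (β * x) := by
    intro x
    rw [F, integral_Ioi_eq_I hβ, sqrt_sq_add_mul_sq hβ.le, mul_sub, mul_one]
  simp_rw [hF]
  rw [integral_comp_mul_left_Ioi (F β) 0 hβ, mul_zero, smul_eq_mul, mul_assoc,
    mul_inv_cancel_left₀ hβ.ne']

variable {z : ℝ}

lemma one_le_sqrt_one_add_sq (z : ℝ) : 1 ≤ √(1 + z ^ 2) :=
  one_le_sqrt.2 (le_add_of_nonneg_right (sq_nonneg z))

lemma j_nonneg : 0 ≤ j β z := by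
  unfold j; positivity

lemma continuous_j : Continuous (j β) := by
  unfold j
  exact Continuous.div (by fun_prop) (by fun_prop) fun z =>
    (zero_lt_one.trans_le (one_le_sqrt_one_add_sq z)).ne'

lemma j_le_one (hβ : 0 ≤ β) : j β z ≤ 1 := by
  have hs := one_le_sqrt_one_add_sq z
  refine div_le_one_of_le₀ (le_trans ?_ hs) (by positivity)
  exact exp_le_one_iff.2 (mul_nonpos_of_nonneg_of_nonpos hβ (by linarith))

lemma j_le_exp_mul_inv (hβ : 0 ≤ β) (hz : 0 < z) : j β z ≤ exp (β * (1 - z)) * z⁻¹ := by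
  have hs : z ≤ √(1 + z ^ 2) := by simpa using le_sqrt_sq_add_sq 1 z
  rw [j, div_eq_mul_inv]
  gcongr

lemma exp_neg_mul_div_one_add_le_j (hβ : 0 ≤ β) (hz : 0 ≤ z) :
    exp (-(β * z)) / (1 + z) ≤ j β z := by
  have hs : √(1 + z ^ 2) ≤ 1 + z := by simpa using sqrt_sq_add_sq_le_add zero_le_one hz
  rw [j]
  gcongr
  nlinarith

lemma integrableOn_j (hβ : 0 < β) : IntegrableOn (j β) (Ioi 0) := by
  refine Integrable.mono' ((exp_neg_integrableOn_Ioi 0 hβ).const_mul (exp β))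
    continuous_j.aestronglyMeasurable ?_
  filter_upwards [ae_restrict_mem measurableSet_Ioi] with z (hz : 0 < z)
  rw [norm_of_nonneg j_nonneg, ← exp_add]
  refine (div_le_self (exp_pos _).le (one_le_sqrt_one_add_sq z)).trans (exp_le_exp.2 ?_)
  have hs : z ≤ √(1 + z ^ 2) := by simpa using le_sqrt_sq_add_sq 1 z
  nlinarith

lemma J_le_log_add_two (hβ₀ : 0 < β) (hβ₁ : β ≤ 1) : J β ≤ log (1 / β) + 2 := by
  have hβinv : 1 ≤ β⁻¹ := (one_le_inv₀ hβ₀).2 hβ₁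
  have hint := integrableOn_j hβ₀
  have hsplit : J β = (∫ z in (0:ℝ)..1, j β z) + (∫ z in (1:ℝ)..β⁻¹, j β z) +
      ∫ z in Ioi β⁻¹, j β z := by
    rw [intervalIntegral.integral_add_adjacent_intervals (continuous_j.intervalIntegrable _ _)
      (continuous_j.intervalIntegrable _ _), intervalIntegral.integral_interval_add_Ioi hint
      (hint.mono_set (Ioi_subset_Ioi (by positivity))), J]
  have hnear : ∫ z in (0:ℝ)..1, j β z ≤ 1 := by
    simpa using intervalIntegral.integral_mono_on zero_le_one
      (continuous_j.intervalIntegrable _ _) (intervalIntegrable_const (μ := volume) (c := 1))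
      fun z _ => j_le_one hβ₀.le
  have hmid : ∫ z in (1:ℝ)..β⁻¹, j β z ≤ log (1 / β) := by
    have hpos : uIcc 1 β⁻¹ ⊆ {0}ᶜ := fun z hz => by
      rw [uIcc_of_le hβinv] at hz
      exact (zero_lt_one.trans_le hz.1).ne'
    have hinv : ∀ z ∈ Icc 1 β⁻¹, j β z ≤ z⁻¹ := fun z hz => by
      have hz₀ : 0 < z := zero_lt_one.trans_le hz.1
      refine (j_le_exp_mul_inv hβ₀.le hz₀).trans (mul_le_of_le_one_left (by positivity) ?_)
      exact exp_le_one_iff.2 (mul_nonpos_of_nonneg_of_nonpos hβ₀.le (by linarith [hz.1]))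
    calc ∫ z in (1:ℝ)..β⁻¹, j β z ≤ ∫ z in (1:ℝ)..β⁻¹, z⁻¹ :=
          intervalIntegral.integral_mono_on hβinv (continuous_j.intervalIntegrable _ _)
            (continuousOn_inv₀.mono hpos).intervalIntegrable hinv
      _ = log (1 / β) := by rw [integral_inv_of_pos one_pos (by positivity), div_one, one_div]
  have hfar : ∫ z in Ioi β⁻¹, j β z ≤ 1 := by
    have hexp : IntegrableOn (fun z => β * exp β * exp (-β * z)) (Ioi β⁻¹) :=
      (exp_neg_integrableOn_Ioi _ hβ₀).const_mul _
    calc ∫ z in Ioi β⁻¹, j β z ≤ ∫ z in Ioi β⁻¹, β * exp β * exp (-β * z) := by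
          refine setIntegral_mono_on (hint.mono_set (Ioi_subset_Ioi (by positivity))) hexp
            measurableSet_Ioi fun z (hz : β⁻¹ < z) => ?_
          have hz₀ : 0 < z := (inv_pos.2 hβ₀).trans hz
          refine (j_le_exp_mul_inv hβ₀.le hz₀).trans ?_
          rw [show β * exp β * exp (-β * z) = exp (β * (1 - z)) * β by
            rw [show β * (1 - z) = β + -β * z by ring, exp_add]; ring]
          gcongr
          exact inv_le_of_inv_le₀ hβ₀ hz.le
      _ = exp (β - 1) := by
          rw [integral_const_mul, integral_exp_mul_Ioi (neg_lt_zero.2 hβ₀), neg_mul,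
            mul_inv_cancel₀ hβ₀.ne', exp_sub, exp_neg]
          field_simp
      _ ≤ 1 := exp_le_one_iff.2 (by linarith)
  linarith

lemma exp_neg_mul_log_one_add_le_J {c : ℝ} (hβ : 0 < β) (hc : 0 ≤ c) :
    exp (-(β * c)) * log (1 + c) ≤ J β := by
  have hpos : ∀ z ∈ uIcc 0 c, 0 < 1 + z := fun z hz => by
    rw [uIcc_of_le hc] at hz; linarith [hz.1]
  have hinv : IntervalIntegrable (fun z => exp (-(β * c)) * (1 + z)⁻¹) volume 0 c :=
    (continuousOn_const.mul ((continuous_const.add continuous_id).continuousOn.inv₀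
      fun z hz => (hpos z hz).ne')).intervalIntegrable
  calc exp (-(β * c)) * log (1 + c) = ∫ z in (0:ℝ)..c, exp (-(β * c)) * (1 + z)⁻¹ := by
        rw [intervalIntegral.integral_const_mul,
          intervalIntegral.integral_comp_add_left (fun z => z⁻¹), add_zero,
          integral_inv_of_pos one_pos (by linarith), div_one]
    _ ≤ ∫ z in (0:ℝ)..c, j β z := by
        refine intervalIntegral.integral_mono_on hc hinv (continuous_j.intervalIntegrable _ _)
          fun z hz => ?_
        refine le_trans ?_ (exp_neg_mul_div_one_add_le_j hβ.le hz.1)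
        rw [div_eq_mul_inv]
        exact mul_le_mul_of_nonneg_right (exp_le_exp.2 (by nlinarith [hz.2]))
          (inv_nonneg.2 (by linarith [hz.1]))
    _ ≤ J β := by
        rw [J, ← intervalIntegral.integral_interval_add_Ioi (integrableOn_j hβ)
          ((integrableOn_j hβ).mono_set (Ioi_subset_Ioi hc))]
        exact le_add_of_nonneg_right (setIntegral_nonneg measurableSet_Ioi fun _ _ => j_nonneg)

lemma exp_neg_inv_mul_one_sub_le_J_div_log (hβ₀ : 0 < β) (hβ₁ : β < 1) :
    exp (-(log (1 / β))⁻¹) * (1 - log (log (1 / β)) / log (1 / β)) ≤ J β / log (1 / β) := by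
  have hL₀ : 0 < log (1 / β) := log_pos ((one_lt_div hβ₀).2 hβ₁)
  rw [le_div_iff₀ hL₀]
  set L := log (1 / β) with hL
  have hc : 0 < (β * L)⁻¹ := inv_pos.2 (mul_pos hβ₀ hL₀)
  have hlog : L - log L ≤ log (1 + (β * L)⁻¹) := calc
    L - log L = log (β * L)⁻¹ := by
      rw [log_inv, log_mul hβ₀.ne' hL₀.ne', hL, one_div, log_inv]; ring
    _ ≤ log (1 + (β * L)⁻¹) := log_le_log hc (by linarith)
  calc exp (-L⁻¹) * (1 - log L / L) * L = exp (-(β * (β * L)⁻¹)) * (L - log L) := by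
        field_simp
    _ ≤ exp (-(β * (β * L)⁻¹)) * log (1 + (β * L)⁻¹) := by gcongr
    _ ≤ J β := exp_neg_mul_log_one_add_le_J hβ₀ hc.le

lemma tendsto_J_div_log : Tendsto (fun β => J β / log (1 / β)) (𝓝[>] 0) (𝓝 1) := by
  have hL : Tendsto (fun β : ℝ => log (1 / β)) (𝓝[>] 0) atTop := by
    simpa only [one_div, log_inv, Function.comp_def] using
      tendsto_neg_atBot_atTop.comp tendsto_log_nhdsGT_zero
  have hlower : Tendsto (fun L : ℝ => exp (-L⁻¹) * (1 - log L / L)) atTop (𝓝 1) := by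
    have hexp : Tendsto (fun L : ℝ => exp (-L⁻¹)) atTop (𝓝 1) := by
      simpa [Function.comp_def] using
        (continuous_exp.tendsto _).comp (tendsto_inv_atTop_zero (𝕜 := ℝ)).neg
    have hlog : Tendsto (fun L : ℝ => 1 - log L / L) atTop (𝓝 1) := by
      simpa using (tendsto_const_nhds (x := (1 : ℝ))).sub
        isLittleO_log_id_atTop.tendsto_div_nhds_zero
    simpa using hexp.mul hlog
  have hupper : Tendsto (fun L : ℝ => 1 + 2 * L⁻¹) atTop (𝓝 1) := by
    simpa using (tendsto_const_nhds (x := (1 : ℝ))).add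
      ((tendsto_inv_atTop_zero (𝕜 := ℝ)).const_mul 2)
  have hβ : ∀ᶠ β in 𝓝[>] (0 : ℝ), β ∈ Ioo 0 1 := Ioo_mem_nhdsGT zero_lt_one
  refine tendsto_of_tendsto_of_tendsto_of_le_of_le' (hlower.comp hL) (hupper.comp hL) ?_ ?_
  · filter_upwards [hβ] with β ⟨hβ₀, hβ₁⟩
    exact exp_neg_inv_mul_one_sub_le_J_div_log hβ₀ hβ₁
  · filter_upwards [hβ] with β ⟨hβ₀, hβ₁⟩
    have hL₀ : 0 < log (1 / β) := log_pos ((one_lt_div hβ₀).2 hβ₁)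
    rw [Function.comp, div_le_iff₀ hL₀, add_mul, one_mul, inv_mul_cancel_right₀ hL₀.ne']
    exact J_le_log_add_two hβ₀ hβ₁.le

end DunkelHanggi

open DunkelHanggi in
/-- As β → 0⁺, the limiting variance Σ_β² = K_β/J_β of the one-dimensional Dunkel–Hänggi
diffusion satisfies Σ_β² ∼ A / log(1/β) with A = 2 ∫₀^∞ (∫_x^∞ e^{−u} u⁻¹ du)² eˣ dx,
i.e. log(1/β) K_β / J_β → A. -/
theorem stmt18 :
    Tendsto (fun β : ℝ => Real.log (1 / β) *
        (2 * β * ∫ x in Ioi (0:ℝ),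
          (∫ y in Ioi x, y * Real.exp (β * (1 - Real.sqrt (1 + y ^ 2))) / (1 + y ^ 2)) ^ 2
            * Real.exp (β * (Real.sqrt (1 + x ^ 2) - 1)))
        / ∫ z in Ioi (0:ℝ), Real.exp (β * (1 - Real.sqrt (1 + z ^ 2))) / Real.sqrt (1 + z ^ 2))
      (nhdsWithin 0 (Ioi 0))
      (nhds (2 * ∫ x in Ioi (0:ℝ), (∫ u in Ioi x, Real.exp (-u) * u⁻¹) ^ 2 * Real.exp x)) := by
  have hA : ∫ x in Ioi (0:ℝ), (∫ u in Ioi x, exp (-u) * u⁻¹) ^ 2 * exp x =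
      ∫ t in Ioi 0, F 0 t :=
    setIntegral_congr_fun measurableSet_Ioi fun t ht => by rw [F_zero ht.le, I_zero ht.le]
  have hLJ : Tendsto (fun β => log (1 / β) / J β) (𝓝[>] 0) (𝓝 1) := by
    simpa using tendsto_J_div_log.inv₀ one_ne_zero
  rw [hA, ← mul_one (2 * _)]
  refine ((tendsto_integral_F.const_mul 2).mul hLJ).congr' ?_
  filter_upwards [self_mem_nhdsWithin] with β hβ
  rw [K_eq_two_mul_integral_F hβ, J]
  simp only [j]
  ring
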